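/- arXiv:1608.08178 — 4 statements merged into one kernel-verified Lean document; each statement's English description precedes it below -/
import Mathlib

section
/- Let r and d be integers with r ≥ 2 and d ≥ 2r−1. A natural number n belongs to the Castelnuovo semigroup S_{r,d} if and only if there exists k ∈ ℕ with k(d−r+1) ≤ n ≤ kd. Equivalently, the set of gaps ℕ ∖ S_{r,d} is the union over k ∈ ℕ of the open integer intervals {n ∈ ℕ : kd < n < (k+1)(d−r+1)}. -/
/-!
A sum of `k` integers from `[a, b]` lies in `[k a, k b]`, and conversely every integer of
`[k a, k b]` is such a sum (peel off `min b (n - (k - 1) a)` and induct on `k`). So the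
semigroup generated by `[a, b]` is the union of the intervals `[k a, k b]`, and its gaps are
the integers strictly between two consecutive ones; every gap is caught by `k = ⌊n / a⌋`.
-/

/-- The Castelnuovo semigroup `S_{r,d}`: the additive submonoid of ℕ generated by
the interval of integers `{d-r+1, …, d}`. -/
def castelnuovoSemigroup (r d : ℕ) : AddSubmonoid ℕ :=
  AddSubmonoid.closure (Set.Icc (d - r + 1) d)

namespace Nat

theorem mem_closure_Icc_iff (a b n : ℕ) :
    n ∈ AddSubmonoid.closure (Set.Icc a b) ↔ ∃ k : ℕ, k * a ≤ n ∧ n ≤ k * b := by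
  constructor
  · intro hn
    induction hn using AddSubmonoid.closure_induction with
    | mem x hx => exact ⟨1, by simpa using hx.1, by simpa using hx.2⟩
    | zero => exact ⟨0, by simp⟩
    | add x y _ _ hx hy =>
      obtain ⟨k, hkx, hxk⟩ := hx
      obtain ⟨l, hly, hyl⟩ := hy
      exact ⟨k + l, by rw [add_mul]; omega, by rw [add_mul]; omega⟩
  · rintro ⟨k, hlow, hhigh⟩
    induction k generalizing n with
    | zero => simp_all
    | succ k ih =>
      rw [succ_mul] at hlow hhigh
      have hab : a ≤ b := by nlinarith
      have hkab : k * a ≤ k * b := Nat.mul_le_mul_left k hab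
      obtain ⟨m, hm_def⟩ : ∃ m, m = min b (n - k * a) := ⟨_, rfl⟩
      have hm : m ∈ Set.Icc a b := ⟨by omega, by omega⟩
      have hrest : n - m ∈ AddSubmonoid.closure (Set.Icc a b) := ih (n - m) (by omega) (by omega)
      rw [show n = m + (n - m) by omega]
      exact add_mem (AddSubmonoid.subset_closure hm) hrest

theorem notMem_closure_Icc_iff {a : ℕ} (b n : ℕ) (ha : 0 < a) :
    n ∉ AddSubmonoid.closure (Set.Icc a b) ↔ ∃ k : ℕ, k * b < n ∧ n < (k + 1) * a := by
  rw [mem_closure_Icc_iff, not_exists]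
  constructor
  · intro hgap
    refine ⟨n / a, ?_, mul_comm a _ ▸ lt_mul_div_succ n ha⟩
    have hnot := hgap (n / a)
    have hfloor := div_mul_le_self n a
    omega
  · rintro ⟨k, hkb, hka⟩ j ⟨hja, hjb⟩
    rcases le_or_gt j k with hjk | hkj
    · have : j * b ≤ k * b := Nat.mul_le_mul_right b hjk
      omega
    · have : (k + 1) * a ≤ j * a := Nat.mul_le_mul_right a hkj
      omega

end Nat

theorem castelnuovo_membership_and_gaps_general (r d : ℕ) :
    (∀ n : ℕ, n ∈ castelnuovoSemigroup r d ↔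
      ∃ k : ℕ, k * (d - r + 1) ≤ n ∧ n ≤ k * d) ∧
    (castelnuovoSemigroup r d : Set ℕ)ᶜ =
      ⋃ k : ℕ, {n : ℕ | k * d < n ∧ n < (k + 1) * (d - r + 1)} := by
  refine ⟨fun n => Nat.mem_closure_Icc_iff _ _ n, ?_⟩
  ext n
  simpa [castelnuovoSemigroup] using Nat.notMem_closure_Icc_iff d n (Nat.succ_pos (d - r))

theorem castelnuovo_membership_and_gaps (r d : ℕ) (hr : 2 ≤ r) (hd : 2 * r - 1 ≤ d) :
    (∀ n : ℕ, n ∈ castelnuovoSemigroup r d ↔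
      ∃ k : ℕ, k * (d - r + 1) ≤ n ∧ n ≤ k * d) ∧
    (castelnuovoSemigroup r d : Set ℕ)ᶜ =
      ⋃ k : ℕ, {n : ℕ | k * d < n ∧ n < (k + 1) * (d - r + 1)} :=
  castelnuovo_membership_and_gaps_general r d
end

section
/- Let r and d be integers with r ≥ 2 and d ≥ 2r−1, and let g be the genus of the Castelnuovo semigroup S_{r,d}. Then g + r ≥ d and the effective weight of S_{r,d} satisfies ewt(S_{r,d}) = r·(g − d + r); i.e., the sum over all gaps b of S_{r,d} of the number of elements a ∈ {d−r+1, …, d} with a < b equals r(g − d + r). -/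
/-- A minimal generator of a numerical semigroup `S ⊆ ℕ`: a nonzero element of `S`
that cannot be written as a sum of two nonzero elements of `S`. -/
def IsMinimalGenerator (S : AddSubmonoid ℕ) (a : ℕ) : Prop :=
  a ∈ S ∧ a ≠ 0 ∧ ¬ ∃ x ∈ S, ∃ y ∈ S, x ≠ 0 ∧ y ≠ 0 ∧ a = x + y

/-- The effective weight of a numerical semigroup: the number of pairs `(b, a)` where
`b` is a gap of `S` and `a` is a minimal generator of `S` with `a < b`.  This equals
`Σ_{b ∈ ℕ∖S} #{minimal generators a of S with a < b}`. -/
noncomputable def effectiveWeight (S : AddSubmonoid ℕ) : ℕ :=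
  {p : ℕ × ℕ | p.1 ∉ S ∧ IsMinimalGenerator S p.2 ∧ p.2 < p.1}.ncard

/-! The elements of `S = ⟨m, …, M⟩` are the `n` with `k * m ≤ n ≤ k * M` for some `k`. When
`M < 2 * m`, no generator is a sum of two nonzero elements, the gaps not exceeding `M` are exactly
`1, …, m - 1`, and every other gap exceeds all `M - m + 1` generators; hence
`ewt S = (M - m + 1) * (g - (m - 1))`. For `S_{r,d}` take `m = d - r + 1` and `M = d`. -/

theorem IsMinimalGenerator.mem_of_closure {s : Set ℕ} {a : ℕ}
    (ha : IsMinimalGenerator (AddSubmonoid.closure s) a) : a ∈ s := by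
  obtain ⟨ha, ha0, hirred⟩ := ha
  induction ha using AddSubmonoid.closure_induction with
  | mem x hx => exact hx
  | zero => exact absurd rfl ha0
  | add x y hx hy ihx ihy =>
    by_cases hx0 : x = 0
    · subst hx0
      simp only [zero_add] at ha0 hirred ⊢
      exact ihy ha0 hirred
    by_cases hy0 : y = 0
    · subst hy0
      simp only [add_zero] at ha0 hirred ⊢
      exact ihx ha0 hirred
    exact absurd ⟨x, hx, y, hy, hx0, hy0, rfl⟩ hirred

namespace AddSubmonoid

section Interval

variable {m M : ℕ}

theorem exists_add_of_mem_Icc_succ_mul {k n : ℕ} (h₁ : (k + 1) * m ≤ n) (h₂ : n ≤ (k + 1) * M) :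
    ∃ a b, a + b = n ∧ a ∈ Set.Icc m M ∧ k * m ≤ b ∧ b ≤ k * M := by
  have hmM : m ≤ M := le_of_mul_le_mul_left (h₁.trans h₂) k.succ_pos
  have hkmM : k * m ≤ k * M := Nat.mul_le_mul_left k hmM
  rw [Nat.succ_mul] at h₁ h₂
  exact ⟨min M (n - k * m), n - min M (n - k * m), by omega, ⟨by omega, by omega⟩, by omega,
    by omega⟩

theorem mem_closure_Icc_iff {n : ℕ} :
    n ∈ closure (Set.Icc m M) ↔ ∃ k, k * m ≤ n ∧ n ≤ k * M := by
  constructor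
  · intro hn
    induction hn using closure_induction with
    | mem x hx => exact ⟨1, by simpa using hx⟩
    | zero => exact ⟨0, by simp⟩
    | add x y _ _ ihx ihy =>
      obtain ⟨k, hkx, hxk⟩ := ihx
      obtain ⟨l, hly, hyl⟩ := ihy
      exact ⟨k + l, by rw [Nat.add_mul, Nat.add_mul]; omega⟩
  · rintro ⟨k, h₁, h₂⟩
    induction k generalizing n with
    | zero => simp [Nat.le_zero.1 (by simpa using h₂)]
    | succ k ih =>
      obtain ⟨a, b, rfl, ha, hb₁, hb₂⟩ := exists_add_of_mem_Icc_succ_mul h₁ h₂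
      exact add_mem (subset_closure ha) (ih hb₁ hb₂)

theorem le_of_mem_closure_Icc {n : ℕ} (hn : n ∈ closure (Set.Icc m M)) (hn0 : n ≠ 0) :
    m ≤ n := by
  obtain ⟨_ | k, h₁, h₂⟩ := mem_closure_Icc_iff.1 hn
  · omega
  · exact le_trans (Nat.le_mul_of_pos_left m k.succ_pos) h₁

/-- Writing `n = k * m + s` with `s < m ≤ k + 1`, the `s` surplus units are absorbed by
raising `s` of the `k` summands `m` to `m + 1 ≤ M`. -/
theorem mem_closure_Icc_of_le (hm : 0 < m) (hmM : m < M) {n : ℕ} (hn : (m - 1) * m ≤ n) :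
    n ∈ closure (Set.Icc m M) := by
  refine mem_closure_Icc_iff.2 ⟨n / m, Nat.div_mul_le_self n m, ?_⟩
  have hk : m - 1 ≤ n / m := (Nat.le_div_iff_mul_le hm).2 hn
  have hdiv : n = n / m * m + n % m := by rw [Nat.mul_comm]; exact (Nat.div_add_mod n m).symm
  have hsurplus : n / m * m + n / m ≤ n / m * M := by
    rw [← Nat.mul_succ]; exact Nat.mul_le_mul_left _ hmM
  have := Nat.mod_lt n hm
  omega

theorem finite_compl_closure_Icc (hm : 0 < m) (hmM : m < M) :
    (closure (Set.Icc m M) : Set ℕ)ᶜ.Finite :=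
  (Set.finite_Iio ((m - 1) * m)).subset fun _ hn =>
    Set.mem_Iio.2 (not_le.1 fun h => hn (mem_closure_Icc_of_le hm hmM h))

theorem isMinimalGenerator_closure_Icc_iff (hM : M < 2 * m) {a : ℕ} :
    IsMinimalGenerator (closure (Set.Icc m M)) a ↔ a ∈ Set.Icc m M := by
  refine ⟨IsMinimalGenerator.mem_of_closure, fun ha => ⟨subset_closure ha, ?_, ?_⟩⟩
  · have := ha.1; omega
  · rintro ⟨x, hx, y, hy, hx0, hy0, rfl⟩
    have := le_of_mem_closure_Icc hx hx0
    have := le_of_mem_closure_Icc hy hy0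
    have := ha.2
    omega

theorem compl_closure_Icc_eq_union :
    (closure (Set.Icc m M) : Set ℕ)ᶜ =
      Set.Ico 1 m ∪ {b | b ∉ closure (Set.Icc m M) ∧ M < b} := by
  ext b
  simp only [Set.mem_compl_iff, SetLike.mem_coe, Set.mem_union, Set.mem_Ico, Set.mem_ofPred_eq]
  constructor
  · intro hb
    have hb0 : b ≠ 0 := fun h => hb (h ▸ zero_mem _)
    by_cases hbM : M < b
    · exact Or.inr ⟨hb, hbM⟩
    · exact Or.inl ⟨Nat.one_le_iff_ne_zero.2 hb0,
        not_le.1 fun hmb => hb (subset_closure ⟨hmb, not_lt.1 hbM⟩)⟩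
  · rintro (⟨hb1, hbm⟩ | ⟨hb, -⟩)
    · exact fun hb => absurd (le_of_mem_closure_Icc hb (by omega)) (not_le.2 hbm)
    · exact hb

/-- A gap lies either below every generator or above all of them. -/
theorem setOf_gap_gt_mem_Icc_eq_prod :
    {p : ℕ × ℕ | p.1 ∉ closure (Set.Icc m M) ∧ p.2 ∈ Set.Icc m M ∧ p.2 < p.1} =
      {b | b ∉ closure (Set.Icc m M) ∧ M < b} ×ˢ Set.Icc m M := by
  ext ⟨b, a⟩
  simp only [Set.mem_ofPred_eq, Set.mem_prod, Set.mem_Icc]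
  constructor
  · rintro ⟨hb, ⟨hma, haM⟩, hab⟩
    exact ⟨⟨hb, not_le.1 fun hbM => hb (subset_closure ⟨by omega, hbM⟩)⟩, hma, haM⟩
  · rintro ⟨⟨hb, hMb⟩, hma, haM⟩
    exact ⟨hb, ⟨hma, haM⟩, by omega⟩

end Interval

end AddSubmonoid

open AddSubmonoid in
theorem castelnuovo_effective_weight (r d : ℕ) (hr : 2 ≤ r) (hd : 2 * r - 1 ≤ d)
    (g : ℕ) (hg : g = ((castelnuovoSemigroup r d : Set ℕ)ᶜ).ncard) :
    d ≤ g + r ∧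
    effectiveWeight (castelnuovoSemigroup r d) = r * (g + r - d) ∧
    {p : ℕ × ℕ | p.1 ∉ castelnuovoSemigroup r d ∧ p.2 ∈ Set.Icc (d - r + 1) d ∧
        p.2 < p.1}.ncard = r * (g + r - d) := by
  unfold castelnuovoSemigroup at hg ⊢
  set high := {b | b ∉ AddSubmonoid.closure (Set.Icc (d - r + 1) d) ∧ d < b}
  have hfin : high.Finite := (finite_compl_closure_Icc (by omega) (by omega)).subset
    fun _ hb => hb.1
  have hgenus : g = (d - r) + high.ncard := by
    rw [hg, compl_closure_Icc_eq_union, Set.ncard_union_eq (Set.disjoint_left.2 fun b hb hb' => by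
        have := hb.2; have := hb'.2; omega) (Set.finite_Ico _ _) hfin, Set.ncard_Ico_nat]
    omega
  have hpairs : {p : ℕ × ℕ | p.1 ∉ AddSubmonoid.closure (Set.Icc (d - r + 1) d) ∧
      p.2 ∈ Set.Icc (d - r + 1) d ∧ p.2 < p.1}.ncard = r * (g + r - d) := by
    rw [setOf_gap_gt_mem_Icc_eq_prod]
    change (high ×ˢ _).ncard = _
    rw [Set.ncard_prod, Set.ncard_Icc_nat, Nat.mul_comm, hgenus]
    congr 1 <;> omega
  refine ⟨by omega, ?_, hpairs⟩
  simpa only [effectiveWeight,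
    isMinimalGenerator_closure_Icc_iff (show d < 2 * (d - r + 1) by omega)] using hpairs
end

section
/- Let r and d be integers with r ≥ 2 and d ≥ 2r−1, and let g be the genus of S_{r,d}. Then 8·ewt(S_{r,d}) ≤ (g+1)², i.e. ewt(S_{r,d}) ≤ ⌊(g+1)²/8⌋. Moreover, if g ≥ 10, then ewt(S_{r,d}) = ⌊(g+1)²/8⌋ if and only if there exists an integer η with −2 ≤ η ≤ 2 such that 2r = g + 1 + η and 4d = 5g + 1 + 3η. -/
open Finset

noncomputable def genus (S : AddSubmonoid ℕ) : ℕ := ((S : Set ℕ)ᶜ).ncard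

theorem mem_of_isMinimalGenerator_closure {s : Set ℕ} {n : ℕ}
    (hn : IsMinimalGenerator (AddSubmonoid.closure s) n) : n ∈ s := by
  obtain ⟨hmem, hn0, hirr⟩ := hn
  have : n = 0 ∨ n ∈ s ∨
      ∃ x ∈ AddSubmonoid.closure s, ∃ y ∈ AddSubmonoid.closure s, x ≠ 0 ∧ y ≠ 0 ∧ n = x + y := by
    clear hn0 hirr
    induction hmem using AddSubmonoid.closure_induction with
    | mem x hx => exact .inr (.inl hx)
    | zero => exact .inl rfl
    | add x y hx hy ihx ihy =>
      by_cases hx0 : x = 0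
      · simpa [hx0] using ihy
      by_cases hy0 : y = 0
      · simpa [hy0] using ihx
      exact .inr (.inr ⟨x, hx, y, hy, hx0, hy0, rfl⟩)
  rcases this with h | h | h
  exacts [absurd h hn0, h, absurd h hirr]

theorem two_mul_sum_range_succ_tsub (e u s : ℕ) :
    2 * ∑ q ∈ range (u + 1), (e * u + s - q * e) = e * u * (u + 1) + 2 * (u + 1) * s := by
  induction u with
  | zero => simp
  | succ u ih =>
    have hshift : ∀ q, e * (u + 1) + s - (q + 1) * e = e * u + s - q * e := fun q => by
      rw [mul_add, add_mul]
      omega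
    rw [sum_range_succ', sum_congr rfl fun q _ => hshift q, mul_add, ih, zero_mul, Nat.sub_zero]
    ring

theorem two_mul_sum_range_tsub {e u s N : ℕ} (hse : s ≤ e) (huN : u < N) :
    2 * ∑ q ∈ range N, (e * u + s - q * e) = e * u * (u + 1) + 2 * (u + 1) * s := by
  obtain ⟨m, rfl⟩ := Nat.exists_eq_add_of_lt huN
  have hvanish : ∑ q ∈ range m, (e * u + s - (u + 1 + q) * e) = 0 := sum_eq_zero fun q _ => by
    have : (u + 1 + q) * e = e * u + e + q * e := by ring
    omega
  rw [add_right_comm, sum_range_add, hvanish, add_zero, two_mul_sum_range_succ_tsub]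

section IntervalSemigroup

variable {c d n : ℕ}

theorem mem_closure_Icc_iff :
    n ∈ AddSubmonoid.closure (Set.Icc c d) ↔ ∃ k, k * c ≤ n ∧ n ≤ k * d := by
  constructor
  · intro hn
    induction hn using AddSubmonoid.closure_induction with
    | mem x hx => exact ⟨1, by simpa using hx.1, by simpa using hx.2⟩
    | zero => exact ⟨0, by simp⟩
    | add x y _ _ ihx ihy =>
      obtain ⟨k, hkx, hxk⟩ := ihx
      obtain ⟨l, hly, hyl⟩ := ihy
      exact ⟨k + l, by rw [add_mul]; omega, by rw [add_mul]; omega⟩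
  · rintro ⟨k, hkn, hnk⟩
    induction k generalizing n with
    | zero => simp_all
    | succ k ih =>
      have hcd : c ≤ d := Nat.le_of_mul_le_mul_left (hkn.trans hnk) k.succ_pos
      have hkcd : k * c ≤ k * d := Nat.mul_le_mul_left k hcd
      rw [add_one_mul] at hkn hnk
      -- peel off the generator `min d (n - k * c)`
      rcases le_total (n - k * c) d with h | h
      · rw [show n = (n - k * c) + k * c by omega]
        exact add_mem (AddSubmonoid.subset_closure ⟨by omega, h⟩) (ih le_rfl hkcd)
      · rw [show n = d + (n - d) by omega]
        exact add_mem (AddSubmonoid.subset_closure ⟨hcd, le_rfl⟩) (ih (by omega) (by omega))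

theorem le_of_mem_closure_Icc (hn : n ∈ AddSubmonoid.closure (Set.Icc c d)) (hn0 : n ≠ 0) :
    c ≤ n := by
  obtain ⟨k, hkn, hnk⟩ := mem_closure_Icc_iff.1 hn
  rcases k with _ | k
  · simp_all
  · exact le_trans (Nat.le_mul_of_pos_left c k.succ_pos) hkn

theorem not_mem_closure_Icc_iff_of_le (hnd : n ≤ d) :
    n ∉ AddSubmonoid.closure (Set.Icc c d) ↔ n ∈ Set.Ioo 0 c := by
  constructor
  · intro hn
    refine ⟨Nat.pos_of_ne_zero fun h => hn (h ▸ zero_mem _), ?_⟩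
    by_contra! hcn
    exact hn (AddSubmonoid.subset_closure ⟨hcn, hnd⟩)
  · rintro ⟨hn0, hnc⟩ hn
    exact absurd (le_of_mem_closure_Icc hn hn0.ne') (by omega)

theorem isMinimalGenerator_closure_Icc_iff (hdc : d < 2 * c) :
    IsMinimalGenerator (AddSubmonoid.closure (Set.Icc c d)) n ↔ n ∈ Set.Icc c d := by
  refine ⟨mem_of_isMinimalGenerator_closure, fun hn => ⟨AddSubmonoid.subset_closure hn,
    by have := hn.1; omega, ?_⟩⟩
  rintro ⟨x, hx, y, hy, hx0, hy0, rfl⟩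
  have := le_of_mem_closure_Icc hx hx0
  have := le_of_mem_closure_Icc hy hy0
  have := hn.2
  omega

theorem not_mem_closure_Icc_iff (hc : 0 < c) (hcd : c < d) :
    n ∉ AddSubmonoid.closure (Set.Icc c d) ↔ ∃ q < c, n ∈ Set.Ioo (q * d) ((q + 1) * c) := by
  rw [mem_closure_Icc_iff]
  constructor
  · intro hn
    set q := n / c
    have hqn : q * c ≤ n := Nat.div_mul_le_self n c
    have hnq : n < c * (q + 1) := Nat.lt_mul_div_succ n hc
    have hdq : q * d = q * c + q * (d - c) := by rw [← mul_add]; congr; omega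
    have hq : q ≤ q * (d - c) := Nat.le_mul_of_pos_right q (by omega)
    have hdn : q * d < n := by
      by_contra! h
      exact hn ⟨q, hqn, h⟩
    have hcq : c * (q + 1) = q * c + c := by ring
    exact ⟨q, by omega, hdn, by linarith⟩
  · rintro ⟨q, -, hqn, hnq⟩ ⟨k, hkn, hnk⟩
    rcases le_or_gt k q with hkq | hqk
    · exact absurd (hnk.trans (Nat.mul_le_mul_right d hkq)) (by omega)
    · exact absurd (hnq.trans_le ((Nat.mul_le_mul_right c hqk))) (by omega)

def gapsOfIcc (c d : ℕ) : Finset ℕ :=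
  (range c).biUnion fun q => Ioo (q * d) ((q + 1) * c)

theorem mem_gapsOfIcc (hc : 0 < c) (hcd : c < d) :
    n ∈ gapsOfIcc c d ↔ n ∉ AddSubmonoid.closure (Set.Icc c d) := by
  simp only [gapsOfIcc, mem_biUnion, mem_range, mem_Ioo, not_mem_closure_Icc_iff hc hcd,
    Set.mem_Ioo]

theorem genus_closure_Icc (hc : 0 < c) (hcd : c < d) :
    genus (AddSubmonoid.closure (Set.Icc c d)) = #(gapsOfIcc c d) := by
  rw [genus, ← Set.ncard_coe_finset]
  congr
  exact (Set.ext fun _ => mem_gapsOfIcc hc hcd).symm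

theorem card_gapsOfIcc (hcd : c ≤ d) :
    #(gapsOfIcc c d) = ∑ q ∈ range c, (c - 1 - q * (d - c)) := by
  rw [gapsOfIcc, card_biUnion]
  · refine sum_congr rfl fun q _ => ?_
    have hdq : q * d = q * c + q * (d - c) := by rw [← mul_add]; congr; omega
    rw [Nat.card_Ioo, add_one_mul]
    omega
  · intro q _ q' _ hqq'
    rw [Function.onFun, disjoint_left]
    intro n hn hn'
    -- a gap `n` lies in the block of index `n / c`
    have key : ∀ {p}, n ∈ Ioo (p * d) ((p + 1) * c) → n / c = p := fun hp =>
      Nat.div_eq_of_lt_le ((Nat.mul_le_mul_left _ hcd).trans (mem_Ioo.1 hp).1.le) (mem_Ioo.1 hp).2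
    exact hqq' ((key hn).symm.trans (key hn'))

theorem two_mul_genus_closure_Icc {u s : ℕ} (hcd : c < d) (hcu : c = (d - c) * u + s + 1)
    (hs : s ≤ d - c) :
    2 * genus (AddSubmonoid.closure (Set.Icc c d)) = (d - c) * u * (u + 1) + 2 * (u + 1) * s := by
  have hu : u ≤ (d - c) * u := Nat.le_mul_of_pos_left u (by omega)
  rw [genus_closure_Icc (by omega) hcd, card_gapsOfIcc hcd.le,
    show c - 1 = (d - c) * u + s by omega]
  exact two_mul_sum_range_tsub hs (by omega)

theorem filter_le_gapsOfIcc (hc : 0 < c) (hcd : c < d) :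
    {b ∈ gapsOfIcc c d | b ≤ d} = Ioo 0 c := by
  ext b
  rw [mem_filter, mem_gapsOfIcc hc hcd, mem_Ioo, ← Set.mem_Ioo]
  exact ⟨fun ⟨hb, hbd⟩ => (not_mem_closure_Icc_iff_of_le hbd).1 hb,
    fun hb => ⟨(not_mem_closure_Icc_iff_of_le (hb.2.le.trans hcd.le)).2 hb, hb.2.le.trans hcd.le⟩⟩

theorem card_gapsOfIcc_eq (hc : 0 < c) (hcd : c < d) :
    #(gapsOfIcc c d) = #{b ∈ gapsOfIcc c d | d < b} + (c - 1) := by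
  rw [← card_filter_add_card_filter_not (d < ·)]
  simp only [not_lt, filter_le_gapsOfIcc hc hcd, Nat.card_Ioo, Nat.sub_zero]

theorem effectiveWeight_closure_Icc (hc : 0 < c) (hcd : c < d) (hdc : d < 2 * c) :
    effectiveWeight (AddSubmonoid.closure (Set.Icc c d)) =
      (d + 1 - c) * #{b ∈ gapsOfIcc c d | d < b} := by
  have hset : {p : ℕ × ℕ | p.1 ∉ AddSubmonoid.closure (Set.Icc c d) ∧
      IsMinimalGenerator (AddSubmonoid.closure (Set.Icc c d)) p.2 ∧ p.2 < p.1} =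
      ↑({b ∈ gapsOfIcc c d | d < b} ×ˢ Finset.Icc c d) := by
    ext ⟨b, a⟩
    simp only [Set.mem_ofPred_eq, coe_product, Set.mem_prod, coe_filter,
      mem_gapsOfIcc hc hcd, isMinimalGenerator_closure_Icc_iff hdc, coe_Icc]
    constructor
    · rintro ⟨hb, ha, hab⟩
      refine ⟨⟨hb, ?_⟩, ha⟩
      by_contra! hbd
      exact ((not_mem_closure_Icc_iff_of_le hbd).1 hb).2.not_ge (ha.1.trans hab.le)
    · rintro ⟨⟨hb, hdb⟩, ha⟩
      exact ⟨hb, ha, ha.2.trans_lt hdb⟩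
  rw [effectiveWeight, hset, Set.ncard_coe_finset, card_product, Nat.card_Icc, mul_comm]

end IntervalSemigroup

theorem castelnuovoSemigroup_invariants {r d : ℕ} (hr : 2 ≤ r) (hd : 2 * r - 1 ≤ d) :
    ∃ u s h, 1 ≤ s ∧ s ≤ r - 1 ∧ d = (r - 1) * (u + 1) + s + 1 ∧
      2 * genus (castelnuovoSemigroup r d) = (r - 1) * u * (u + 1) + 2 * (u + 1) * s ∧
      genus (castelnuovoSemigroup r d) = h + ((r - 1) * u + s) ∧
      effectiveWeight (castelnuovoSemigroup r d) = r * h := by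
  set c := d - r + 1
  have hc : 0 < c := by omega
  have hcd : c < d := by omega
  have hdc : d < 2 * c := by omega
  have hdc' : d - c = r - 1 := by omega
  obtain ⟨u, s, hs, hsr, hcu⟩ : ∃ u s, 1 ≤ s ∧ s ≤ r - 1 ∧ c = (r - 1) * u + s + 1 := by
    have := Nat.div_add_mod (c - 2) (r - 1)
    have := Nat.mod_lt (c - 2) (show 0 < r - 1 by omega)
    exact ⟨(c - 2) / (r - 1), (c - 2) % (r - 1) + 1, by omega, by omega, by omega⟩
  have hgenus := two_mul_genus_closure_Icc (u := u) (s := s) hcd (by rw [hdc']; omega) (by omega)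
  rw [hdc'] at hgenus
  refine ⟨u, s, #{b ∈ gapsOfIcc c d | d < b}, hs, hsr, by rw [mul_add]; omega, hgenus, ?_, ?_⟩
  · rw [castelnuovoSemigroup, genus_closure_Icc hc hcd, card_gapsOfIcc_eq hc hcd]
    omega
  · rw [castelnuovoSemigroup, effectiveWeight_closure_Icc hc hcd hdc, show d + 1 - c = r by omega]

section Arithmetic

variable {e u s g h : ℕ}

theorem eight_mul_le_sq (hs : 1 ≤ s) (hg : 2 * g = e * u * (u + 1) + 2 * (u + 1) * s)
    (hgh : g = h + (e * u + s)) : 8 * ((e + 1) * h) ≤ (g + 1) ^ 2 := by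
  obtain _ | _ | u := u
  · obtain rfl : h = 0 := by simp at hg; omega
    simp
  · obtain ⟨rfl, rfl⟩ : g = e + 2 * s ∧ h = s := by simp at hg hgh; omega
    calc 8 * ((e + 1) * h) = 4 * (e + 1) * (2 * h) := by ring
      _ ≤ (e + 1 + 2 * h) ^ 2 := four_mul_le_sq_add _ _
      _ = (e + 2 * h + 1) ^ 2 := by ring
  · have hX : 2 * (e + 1) + h ≤ g + 1 := by nlinarith
    calc 8 * ((e + 1) * h) = 4 * (2 * (e + 1)) * h := by ring
      _ ≤ (2 * (e + 1) + h) ^ 2 := four_mul_le_sq_add _ _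
      _ ≤ (g + 1) ^ 2 := Nat.pow_le_pow_left hX 2

theorem eq_one_of_sq_lt_eight_mul_add_eight (hs : 1 ≤ s) (hse : s ≤ e)
    (hg : 2 * g = e * u * (u + 1) + 2 * (u + 1) * s) (hgh : g = h + (e * u + s))
    (hg10 : 10 ≤ g) (hlt : (g + 1) ^ 2 < 8 * ((e + 1) * h) + 8) : u = 1 := by
  obtain _ | _ | u := u
  · obtain rfl : h = 0 := by simp at hg; omega
    nlinarith
  · rfl
  · exfalso
    rw [show e * (u + 1 + 1) = e * u + 2 * e by ring] at hgh
    have hX : 2 * (e + 1) + h ≤ g + 1 := by omega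
    have hAMGM : 4 * (2 * (e + 1)) * h ≤ (2 * (e + 1) + h) ^ 2 := four_mul_le_sq_add _ _
    rcases hX.lt_or_eq with hX | hX
    · have := Nat.pow_le_pow_left (Nat.succ_le_of_lt hX) 2
      nlinarith
    · -- `2 r + h = g + 1` forces `u = 2` and `s = 1`, where `(g + 1)² - 8 r h = (r - 1)²`
      obtain ⟨rfl, rfl⟩ : u = 0 ∧ s = 1 := by
        have heu : e * u = 0 := by omega
        exact ⟨(Nat.mul_eq_zero.1 heu).resolve_left (by omega), by omega⟩
      obtain ⟨rfl, rfl⟩ : g = 3 * e + 3 ∧ h = e + 2 := by ring_nf at hg hgh; omega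
      have he : 3 ≤ e := by omega
      nlinarith

end Arithmetic

theorem eight_mul_add_sq_eq {r d g h η : ℤ} (hgh : g + r = h + d) (hr : 2 * r = g + 1 + η)
    (hd : 4 * d = 5 * g + 1 + 3 * η) : 8 * (r * h) + η ^ 2 = (g + 1) ^ 2 := by
  linear_combination (-8 * r) * hgh + (g + 1 - η + 4 * r) * hr - 2 * r * hd

theorem castelnuovo_max_ewt (r d : ℕ) (hr : 2 ≤ r) (hd : 2 * r - 1 ≤ d)
    (g : ℕ) (hg : g = ((castelnuovoSemigroup r d : Set ℕ)ᶜ).ncard) :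
    8 * effectiveWeight (castelnuovoSemigroup r d) ≤ (g + 1) ^ 2 ∧
    (10 ≤ g →
      (effectiveWeight (castelnuovoSemigroup r d) = (g + 1) ^ 2 / 8 ↔
        ∃ η : ℤ, -2 ≤ η ∧ η ≤ 2 ∧ (2 * r : ℤ) = (g : ℤ) + 1 + η ∧
          (4 * d : ℤ) = 5 * (g : ℤ) + 1 + 3 * η)) := by
  obtain ⟨u, s, h, hs, hsr, hdu, hg2, hgh, hW⟩ := castelnuovoSemigroup_invariants hr hd
  rw [show genus (castelnuovoSemigroup r d) = g from hg.symm] at hg2 hgh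
  obtain ⟨e, rfl⟩ : ∃ e, r = e + 1 := ⟨r - 1, by omega⟩
  rw [Nat.add_sub_cancel] at hsr hdu hg2 hgh
  rw [mul_add_one] at hdu
  have hgd : (g : ℤ) + (e + 1 : ℕ) = h + d := by push_cast; omega
  rw [hW]
  refine ⟨eight_mul_le_sq hs hg2 hgh, fun hg10 => ⟨fun hmax => ?_, fun ⟨η, hη, hη', hηr, hηd⟩ => ?_⟩⟩
  · have hlt : (g + 1) ^ 2 < 8 * ((e + 1) * h) + 8 := by omega
    obtain rfl := eq_one_of_sq_lt_eight_mul_add_eight hs hsr hg2 hgh hg10 hlt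
    set η : ℤ := e + 1 - 2 * s
    have hηr : (2 * (e + 1 : ℕ) : ℤ) = g + 1 + η := by push_cast; omega
    have hηd : (4 * d : ℤ) = 5 * g + 1 + 3 * η := by omega
    have hsq := eight_mul_add_sq_eq hgd hηr hηd
    zify at hlt
    obtain ⟨hlo, hhi⟩ := abs_lt_of_sq_lt_sq' (a := η) (b := 3) (by push_cast at hsq; linarith)
      (by norm_num)
    exact ⟨η, by omega, by omega, hηr, hηd⟩
  · have hsq := eight_mul_add_sq_eq hgd hηr hηd
    have hη2 : η ^ 2 ≤ 2 ^ 2 := sq_le_sq' hη hη'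
    push_cast at hsq
    refine (Nat.div_eq_of_lt_le ?_ ?_).symm <;> zify <;> linarith [sq_nonneg η]
end

section
/- Let r and d be integers with r ≥ 3 and d ≥ 2r+1, and let m and ε be the quotient and remainder when d−1 is divided by r−1. Then the integer E = ((m−2) choose 2)·(r−1)(r−2) + (r−3)·((r−2)(m−2) − 2) + ε·((r−2)(m−1) − 1) satisfies E ≥ 0, and E = 0 if and only if d = 2r+1 or (r,d) = (4,10). -/
theorem excess_nonneg_and_zero_cases (r d : ℕ) (hr : 3 ≤ r) (hd : 2 * r + 1 ≤ d)
    (m ε : ℕ) (hm : m = (d - 1) / (r - 1)) (hε : ε = (d - 1) % (r - 1))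
    (E : ℤ)
    (hE : E = (Nat.choose (m - 2) 2 : ℤ) * ((r : ℤ) - 1) * ((r : ℤ) - 2) +
        ((r : ℤ) - 3) * (((r : ℤ) - 2) * ((m : ℤ) - 2) - 2) +
        (ε : ℤ) * (((r : ℤ) - 2) * ((m : ℤ) - 1) - 1)) :
    0 ≤ E ∧ (E = 0 ↔ d = 2 * r + 1 ∨ (r = 4 ∧ d = 10)) := by
  have hdiv : (r - 1) * m + ε = d - 1 := by
    rw [hm, hε]; exact Nat.div_add_mod _ _
  have hεlt : ε < r - 1 := by
    rw [hε]; exact Nat.mod_lt _ (by omega)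
  have hm2 : 2 ≤ m := by
    rw [hm]; exact (Nat.le_div_iff_mul_le (by omega)).mpr (by omega)
  clear hm hε
  have hcase : m = 2 ∨ m = 3 ∨ 4 ≤ m := by omega
  rcases hcase with h2 | h3 | h4
  · -- m = 2
    subst h2
    have hε2 : 2 ≤ ε := by omega
    have hr4 : 4 ≤ r := by omega
    have hrz : (4:ℤ) ≤ (r:ℤ) := by exact_mod_cast hr4
    have hεz : (2:ℤ) ≤ (ε:ℤ) := by exact_mod_cast hε2
    have hEeq : E = ((ε:ℤ) - 2) * ((r:ℤ) - 3) := by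
      rw [hE]; norm_num; ring
    constructor
    · nlinarith
    constructor
    · intro h0
      left
      rcases mul_eq_zero.mp (hEeq ▸ h0) with h | h
      · have : (ε:ℤ) = 2 := by linarith
        have : ε = 2 := by exact_mod_cast this
        omega
      · linarith
    · intro h
      rcases h with h | ⟨h1, h2⟩
      · have : ε = 2 := by omega
        have : (ε:ℤ) = 2 := by exact_mod_cast this
        rw [hEeq, this]; ring
      · omega
  · -- m = 3
    subst h3
    have hrz : (3:ℤ) ≤ (r:ℤ) := by exact_mod_cast hr
    have hεz : (0:ℤ) ≤ (ε:ℤ) := Int.natCast_nonneg ε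
    have hEeq : E = ((r:ℤ) - 3) * ((r:ℤ) - 4) + (ε:ℤ) * (2*(r:ℤ) - 5) := by
      rw [hE]; norm_num; ring
    have hA : (0:ℤ) ≤ ((r:ℤ) - 3) * ((r:ℤ) - 4) := by
      rcases (by omega : r = 3 ∨ 4 ≤ r) with h | h
      · subst h; norm_num
      · have : (4:ℤ) ≤ (r:ℤ) := by exact_mod_cast h
        nlinarith
    have hB : (0:ℤ) ≤ (ε:ℤ) * (2*(r:ℤ) - 5) := by nlinarith
    constructor
    · rw [hEeq]; linarith
    constructor
    · intro h0
      rw [hEeq] at h0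
      have hA0 : ((r:ℤ) - 3) * ((r:ℤ) - 4) = 0 := by linarith
      have hB0 : (ε:ℤ) * (2*(r:ℤ) - 5) = 0 := by linarith
      have hε0 : ε = 0 := by
        rcases mul_eq_zero.mp hB0 with h | h
        · exact_mod_cast h
        · exfalso; linarith
      have hr34 : r = 3 ∨ r = 4 := by
        rcases mul_eq_zero.mp hA0 with h | h
        · left; have : (r:ℤ) = 3 := by linarith
          exact_mod_cast this
        · right; have : (r:ℤ) = 4 := by linarith
          exact_mod_cast this
      omega
    · intro h
      have hre : ε = 0 ∧ (r = 3 ∨ r = 4) := by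
        rcases h with h | ⟨h1, h2⟩
        · constructor
          · omega
          · left; omega
        · subst h1; constructor
          · omega
          · right; rfl
      obtain ⟨hε0, hr34⟩ := hre
      have hεz0 : (ε:ℤ) = 0 := by exact_mod_cast hε0
      rcases hr34 with h | h
      · have : (r:ℤ) = 3 := by exact_mod_cast h
        rw [hEeq, this, hεz0]; ring
      · have : (r:ℤ) = 4 := by exact_mod_cast h
        rw [hEeq, this, hεz0]; ring
  · -- 4 ≤ m
    have hch : 1 ≤ Nat.choose (m - 2) 2 := Nat.choose_pos (by omega)
    obtain ⟨c, hc⟩ : ∃ c : ℤ, (Nat.choose (m - 2) 2 : ℤ) = c := ⟨_, rfl⟩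
    rw [hc] at hE
    have hcz : (1:ℤ) ≤ c := hc ▸ (by exact_mod_cast hch)
    have hrz : (3:ℤ) ≤ (r:ℤ) := by exact_mod_cast hr
    have hmz : (4:ℤ) ≤ (m:ℤ) := by exact_mod_cast h4
    have hεz : (0:ℤ) ≤ (ε:ℤ) := Int.natCast_nonneg ε
    have hpos : 0 < E := by
      rw [hE]
      clear hE hc hch hdiv hεlt hd hm2 h4 hr
      have q2 : (2:ℤ) ≤ ((r:ℤ) - 1) * ((r:ℤ) - 2) := by nlinarith
      have t1 : (2:ℤ) ≤ c * ((r:ℤ) - 1) * ((r:ℤ) - 2) := by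
        nlinarith [mul_nonneg (mul_nonneg (by linarith : (0:ℤ) ≤ c - 1)
          (by linarith : (0:ℤ) ≤ (r:ℤ) - 1)) (by linarith : (0:ℤ) ≤ (r:ℤ) - 2)]
      have inner2 : (0:ℤ) ≤ ((r:ℤ) - 2) * ((m:ℤ) - 2) - 2 := by
        nlinarith [mul_nonneg (by linarith : (0:ℤ) ≤ (r:ℤ) - 3)
          (by linarith : (0:ℤ) ≤ (m:ℤ) - 4)]
      have t2 : (0:ℤ) ≤ ((r:ℤ) - 3) * (((r:ℤ) - 2) * ((m:ℤ) - 2) - 2) :=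
        mul_nonneg (by linarith) inner2
      have inner3 : (0:ℤ) ≤ ((r:ℤ) - 2) * ((m:ℤ) - 1) - 1 := by
        nlinarith [mul_nonneg (by linarith : (0:ℤ) ≤ (r:ℤ) - 3)
          (by linarith : (0:ℤ) ≤ (m:ℤ) - 4)]
      have t3 : (0:ℤ) ≤ (ε:ℤ) * (((r:ℤ) - 2) * ((m:ℤ) - 1) - 1) :=
        mul_nonneg hεz inner3
      linarith
    refine ⟨le_of_lt hpos, ?_, ?_⟩
    · intro h0; exfalso; rw [h0] at hpos; exact lt_irrefl 0 hpos
    · intro h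
      exfalso
      rcases h with h | ⟨h1, h2⟩
      · have hmul : (r - 1) * 4 ≤ (r - 1) * m := Nat.mul_le_mul_left _ h4
        obtain ⟨p, hp⟩ : ∃ p, (r - 1) * m = p := ⟨_, rfl⟩
        rw [hp] at hdiv hmul
        omega
      · subst h1
        omega
end
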